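/- arXiv:2008.07503 — 4 statements merged into one kernel-verified Lean document; each statement's English description precedes it below -/
import Mathlib

section
/- Let f be a smooth complex-valued function defined on a neighborhood of 0 in ℂ and let n be a positive integer. Then the limit as ε → 0 of the contour integral over the circle |z| = ε (counter-clockwise) of f(z) dz̄ / z^n equals 0. -/
open Complex Filter Real Topology MeasureTheory intervalIntegral

lemma aux_smooth_fderiv_apply (g : ℂ → ℂ) (U : Set ℂ) (hU : IsOpen U)
    (hg : ContDiffOn ℝ (⊤ : ℕ∞) g U) (v : ℂ) :
    ContDiffOn ℝ (⊤ : ℕ∞) (fun z => fderiv ℝ g z v) U := by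
  have h1 : ContDiffOn ℝ (⊤ : ℕ∞) (fderivWithin ℝ g U) U :=
    hg.fderivWithin hU.uniqueDiffOn (by simp)
  have h2 : ContDiffOn ℝ (⊤ : ℕ∞) (fun z => fderiv ℝ g z) U :=
    h1.congr fun z hz => (fderivWithin_of_isOpen (𝕜 := ℝ) (f := g) hU hz).symm
  exact h2.clm_apply contDiffOn_const

lemma key_lemma (U : Set ℂ) (hU : IsOpen U) (h0 : (0:ℂ) ∈ U) :
    ∀ (m : ℕ) (k : ℤ), (m : ℤ) < |k| → ∀ g : ℂ → ℂ, ContDiffOn ℝ (⊤ : ℕ∞) g U →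
    Tendsto (fun ε : ℝ => ((ε:ℂ)^m)⁻¹ *
        ∫ θ in (0:ℝ)..(2*π), Complex.exp ((((k:ℝ)*θ :ℝ) :ℂ) * Complex.I) * g (circleMap 0 ε θ))
      (𝓝[>] (0:ℝ)) (𝓝 0) := by
  obtain ⟨r, hr, hrU⟩ : ∃ r > 0, Metric.closedBall (0:ℂ) r ⊆ U :=
    (Metric.nhds_basis_closedBall.mem_iff).mp (hU.mem_nhds h0)
  have hmem : ∀ (ε : ℝ), ε ∈ Set.Ioo 0 r → ∀ θ : ℝ, circleMap 0 ε θ ∈ U := by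
    intro ε hε θ
    apply hrU
    rw [Metric.mem_closedBall, dist_zero_right, norm_circleMap_zero]
    rw [abs_of_pos hε.1]; exact le_of_lt hε.2
  have hcont : ∀ (h : ℂ → ℂ), ContinuousOn h U → ∀ (ε : ℝ), ε ∈ Set.Ioo 0 r →
      Continuous (fun θ : ℝ => h (circleMap 0 ε θ)) := by
    intro h hh ε hε
    rw [continuous_iff_continuousAt]
    intro θ
    exact (hh.continuousAt (hU.mem_nhds (hmem ε hε θ))).comp
      (continuous_circleMap 0 ε).continuousAt
  intro m
  induction m with
  | zero =>
    intro k hk g hg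
    simp only [pow_zero, inv_one, one_mul]
    have hkne : k ≠ 0 := by rintro rfl; simp at hk
    have hk0 : (k:ℂ) * Complex.I ≠ 0 := by simp [hkne]
    obtain ⟨C, hC⟩ := (isCompact_closedBall (0:ℂ) r).exists_bound_of_continuousOn
      (hg.continuousOn.mono hrU)
    have hlim0 : (∫ θ in (0:ℝ)..(2*π),
        Complex.exp ((((k:ℝ)*θ :ℝ) :ℂ) * Complex.I) * g 0) = 0 := by
      have : ∀ θ : ℝ, Complex.exp ((((k:ℝ)*θ :ℝ) :ℂ) * Complex.I) * g 0
          = Complex.exp (((k:ℂ) * Complex.I) * (θ:ℂ)) * g 0 := by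
        intro θ; congr 2; push_cast; ring
      rw [intervalIntegral.integral_congr (fun θ _ => this θ),
        intervalIntegral.integral_mul_const, integral_exp_mul_complex hk0]
      have h2 : (k:ℂ) * Complex.I * ((2*π:ℝ):ℂ) = (k:ℂ) * (2*(π:ℂ)*Complex.I) := by
        push_cast; ring
      rw [h2, Complex.exp_int_mul_two_pi_mul_I]
      simp
    have main : Tendsto (fun ε : ℝ => ∫ θ in (0:ℝ)..(2*π),
        Complex.exp ((((k:ℝ)*θ :ℝ) :ℂ) * Complex.I) * g (circleMap 0 ε θ)) (𝓝[>] (0:ℝ))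
        (𝓝 (∫ θ in (0:ℝ)..(2*π), Complex.exp ((((k:ℝ)*θ :ℝ) :ℂ) * Complex.I) * g 0)) := by
      apply intervalIntegral.tendsto_integral_filter_of_dominated_convergence (fun _ => C)
      · filter_upwards [Ioo_mem_nhdsGT_of_mem (by simp [hr] : (0:ℝ) ∈ Set.Ico 0 r)] with ε hε
        exact (((Complex.continuous_exp.comp (by continuity)).mul
          (hcont g hg.continuousOn ε hε))).aestronglyMeasurable
      · filter_upwards [Ioo_mem_nhdsGT_of_mem (by simp [hr] : (0:ℝ) ∈ Set.Ico 0 r)] with ε hε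
        filter_upwards with θ _
        rw [norm_mul]
        have h1 : ‖Complex.exp ((((k:ℝ)*θ :ℝ) :ℂ) * Complex.I)‖ = 1 := by
          rw [Complex.norm_exp_ofReal_mul_I]
        rw [h1, one_mul]
        apply hC
        rw [Metric.mem_closedBall, dist_zero_right, norm_circleMap_zero]
        rw [abs_of_pos hε.1]; exact le_of_lt hε.2
      · exact intervalIntegrable_const
      · filter_upwards with θ _
        apply Tendsto.const_mul
        have h2 : Tendsto (fun ε : ℝ => circleMap 0 ε θ) (𝓝[>] 0) (𝓝 0) := by
          have h3 : Tendsto (fun ε : ℝ => circleMap 0 ε θ) (𝓝 0) (𝓝 (circleMap 0 0 θ)) := by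
            apply Continuous.tendsto
            simp only [circleMap]; continuity
          simpa [circleMap] using h3.mono_left nhdsWithin_le_nhds
        exact ((hg.continuousOn.continuousAt (hU.mem_nhds h0)).tendsto).comp h2
    rw [hlim0] at main
    exact main
  | succ m IH =>
    intro k hk g hg
    have hkne : k ≠ 0 := by rintro rfl; simp at hk; omega
    have hkI : ((k:ℂ) * Complex.I) ≠ 0 := by simp [hkne]
    have habs : ((m:ℤ)+1) < |k| := by push_cast at hk; linarith
    set g₁ : ℂ → ℂ := fun z => (Complex.I * fderiv ℝ g z 1 + fderiv ℝ g z Complex.I)/2 with hg₁def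
    set g₂ : ℂ → ℂ := fun z => (-Complex.I * fderiv ℝ g z 1 + fderiv ℝ g z Complex.I)/2 with hg₂def
    have hD1 := aux_smooth_fderiv_apply g U hU hg 1
    have hDI := aux_smooth_fderiv_apply g U hU hg Complex.I
    have hg₁ : ContDiffOn ℝ (⊤ : ℕ∞) g₁ U := ((contDiffOn_const.mul hD1).add hDI).div_const 2
    have hg₂ : ContDiffOn ℝ (⊤ : ℕ∞) g₂ U := ((contDiffOn_const.mul hD1).add hDI).div_const 2
    have e1 : (m:ℤ) < |k+1| := by
      have h := abs_add_le (k+1) (-1)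
      simp only [add_neg_cancel_right, abs_neg, abs_one] at h
      linarith
    have e2 : (m:ℤ) < |k-1| := by
      have h := abs_add_le (k-1) 1
      simp only [sub_add_cancel, abs_one] at h
      linarith
    have IH1 := IH (k+1) e1 g₁ hg₁
    have IH2 := IH (k-1) e2 g₂ hg₂
    have Hlim := (IH1.add IH2).const_mul ((-((k:ℂ) * Complex.I))⁻¹)
    rw [add_zero, mul_zero] at Hlim
    apply Tendsto.congr' _ Hlim
    filter_upwards [Ioo_mem_nhdsGT_of_mem (by simp [hr] : (0:ℝ) ∈ Set.Ico 0 r)] with ε hε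
    have hεne : (ε:ℂ) ≠ 0 := by exact_mod_cast ne_of_gt hε.1
    set w : ℝ → ℂ := fun θ => circleMap 0 ε θ with hwdef
    set u : ℝ → ℂ := fun t : ℝ => Complex.exp (((k:ℂ)*Complex.I) * (t:ℂ)) with hudef
    set G : ℝ → ℂ := fun θ => g (w θ) with hGdef
    set G' : ℝ → ℂ := fun θ => (ε:ℂ) * (Complex.exp ((θ:ℂ)*Complex.I) * g₁ (w θ)
        + Complex.exp (-(θ:ℂ)*Complex.I) * g₂ (w θ)) with hG'def
    -- derivative of G
    have hG : ∀ θ : ℝ, HasDerivAt G (G' θ) θ := by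
      intro θ
      have hw : HasDerivAt (circleMap 0 ε) (circleMap 0 ε θ * Complex.I) θ :=
        hasDerivAt_circleMap 0 ε θ
      have hdg : DifferentiableAt ℝ g (circleMap 0 ε θ) :=
        (hg.differentiableOn (by simp)).differentiableAt (hU.mem_nhds (hmem ε hε θ))
      have hcomp := (hdg.hasFDerivAt).comp_hasDerivAt θ hw
      refine hcomp.congr_deriv (Eq.symm ?_)
      set L := fderiv ℝ g (circleMap 0 ε θ) with hL
      have hdec : circleMap 0 ε θ * Complex.I
          = ((-ε * Real.sin θ : ℝ)) • (1:ℂ) + ((ε * Real.cos θ : ℝ)) • Complex.I := by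
        simp only [circleMap, Complex.real_smul, Complex.exp_mul_I, zero_add]
        push_cast
        linear_combination ((ε:ℂ) * Complex.sin (θ:ℂ)) * Complex.I_sq
      rw [hdec, map_add, L.map_smul, L.map_smul]
      simp only [hG'def, hg₁def, hg₂def, hwdef, Complex.real_smul, Complex.exp_mul_I,
        Complex.cos_neg, Complex.sin_neg]
      push_cast
      linear_combination ((ε:ℂ) * Complex.sin (θ:ℂ) * (L 1)) * Complex.I_sq
    -- derivative of u
    have hu : ∀ θ : ℝ, HasDerivAt u (((k:ℂ)*Complex.I) * u θ) θ := by
      intro θ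
      have h1 : HasDerivAt (fun t : ℝ => ((k:ℂ)*Complex.I) * (t:ℂ)) ((k:ℂ)*Complex.I) θ := by
        simpa using (Complex.ofRealCLM.hasDerivAt (x := θ)).const_mul ((k:ℂ)*Complex.I)
      simpa [hudef, mul_comm] using h1.cexp
    -- continuity
    have hcg : Continuous G := hcont g hg.continuousOn ε hε
    have hcg1 : Continuous fun θ => g₁ (w θ) := hcont g₁ hg₁.continuousOn ε hε
    have hcg2 : Continuous fun θ => g₂ (w θ) := hcont g₂ hg₂.continuousOn ε hε
    have hcu : Continuous u := by fun_prop
    have hce1 : Continuous fun θ : ℝ => Complex.exp ((θ:ℂ)*Complex.I) := by fun_prop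
    have hce2 : Continuous fun θ : ℝ => Complex.exp (-(θ:ℂ)*Complex.I) := by fun_prop
    have hcG' : Continuous G' :=
      continuous_const.mul ((hce1.mul hcg1).add (hce2.mul hcg2))
    -- integration by parts
    have hibp := intervalIntegral.integral_deriv_mul_eq_sub
      (u := u) (v := G) (u' := fun θ => ((k:ℂ)*Complex.I) * u θ) (v' := G')
      (fun θ _ => hu θ) (fun θ _ => hG θ)
      ((continuous_const.mul hcu).intervalIntegrable 0 (2*π))
      (hcG'.intervalIntegrable 0 (2*π))
    have hper : G (2*π) = G 0 := by
      have := periodic_circleMap 0 ε 0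
      simp only [hGdef, hwdef]
      rw [show (2*π : ℝ) = 0 + 2*π by ring, this]
    have hu2π : u (2*π) = 1 := by
      simp only [hudef]
      rw [show ((k:ℂ)*Complex.I) * ((2*π : ℝ):ℂ) = (k:ℂ) * (2*(π:ℂ)*Complex.I) by push_cast; ring]
      exact Complex.exp_int_mul_two_pi_mul_I k
    have hu0 : u 0 = 1 := by simp [hudef]
    rw [hper, hu2π, hu0] at hibp
    simp only [one_mul, sub_self] at hibp
    rw [intervalIntegral.integral_add (f := fun x => (k:ℂ)*Complex.I*u x * G x) (g := fun x => u x * G' x)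
      (((continuous_const.mul hcu).mul hcg).intervalIntegrable 0 (2*π))
      ((hcu.mul hcG').intervalIntegrable 0 (2*π))] at hibp
    -- ∫ u G' = ε * (S1 + S2)
    have hsplit : (∫ θ in (0:ℝ)..(2*π), u θ * G' θ)
        = (ε:ℂ) * ((∫ θ in (0:ℝ)..(2*π),
            Complex.exp (((((k+1:ℤ)):ℝ)*θ :ℝ) * Complex.I) * g₁ (circleMap 0 ε θ))
          + (∫ θ in (0:ℝ)..(2*π),
            Complex.exp (((((k-1:ℤ)):ℝ)*θ :ℝ) * Complex.I) * g₂ (circleMap 0 ε θ))) := by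
      rw [← intervalIntegral.integral_add
        (f := fun θ => Complex.exp (((((k+1:ℤ)):ℝ)*θ :ℝ) * Complex.I) * g₁ (circleMap 0 ε θ))
        (g := fun θ => Complex.exp (((((k-1:ℤ)):ℝ)*θ :ℝ) * Complex.I) * g₂ (circleMap 0 ε θ))
        (((by fun_prop : Continuous fun θ : ℝ => Complex.exp (((((k+1:ℤ)):ℝ)*θ :ℝ) * Complex.I)).mul hcg1).intervalIntegrable 0 (2*π))
        (((by fun_prop : Continuous fun θ : ℝ => Complex.exp (((((k-1:ℤ)):ℝ)*θ :ℝ) * Complex.I)).mul hcg2).intervalIntegrable 0 (2*π)),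
        ← intervalIntegral.integral_const_mul]
      apply intervalIntegral.integral_congr
      intro θ _
      simp only [hudef, hG'def]
      have e₁ : Complex.exp ((k:ℂ)*Complex.I*(θ:ℂ) + (θ:ℂ)*Complex.I)
          = Complex.exp (((((k+1:ℤ)):ℝ)*θ :ℝ) * Complex.I) := by
        congr 1; push_cast; ring
      have e₂ : Complex.exp ((k:ℂ)*Complex.I*(θ:ℂ) + -(θ:ℂ)*Complex.I)
          = Complex.exp (((((k-1:ℤ)):ℝ)*θ :ℝ) * Complex.I) := by
        congr 1; push_cast; ring
      rw [show Complex.exp ((k:ℂ)*Complex.I*(θ:ℂ)) * ((ε:ℂ) * (Complex.exp ((θ:ℂ)*Complex.I) * g₁ (w θ) + Complex.exp (-(θ:ℂ)*Complex.I) * g₂ (w θ)))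
          = (ε:ℂ) * ((Complex.exp ((k:ℂ)*Complex.I*(θ:ℂ)) * Complex.exp ((θ:ℂ)*Complex.I)) * g₁ (w θ)
            + (Complex.exp ((k:ℂ)*Complex.I*(θ:ℂ)) * Complex.exp (-(θ:ℂ)*Complex.I)) * g₂ (w θ)) by ring,
        ← Complex.exp_add, ← Complex.exp_add, e₁, e₂]
    rw [hsplit] at hibp
    -- final algebra
    have hSint : (∫ θ in (0:ℝ)..(2*π), Complex.exp ((((k:ℝ)*θ :ℝ) :ℂ) * Complex.I) * g (circleMap 0 ε θ))
        = ∫ θ in (0:ℝ)..(2*π), u θ * G θ := by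
      apply intervalIntegral.integral_congr
      intro θ _
      simp only [hudef, hGdef, hwdef]
      congr 2
      push_cast; ring
    have hconst : (∫ θ in (0:ℝ)..(2*π), ((k:ℂ)*Complex.I) * u θ * G θ)
        = ((k:ℂ)*Complex.I) * ∫ θ in (0:ℝ)..(2*π), u θ * G θ := by
      rw [← intervalIntegral.integral_const_mul]
      apply intervalIntegral.integral_congr
      intro θ _
      ring
    rw [hconst] at hibp
    rw [hSint]
    set X := ∫ θ in (0:ℝ)..(2*π), u θ * G θ with hXdef
    set S1 := ∫ θ in (0:ℝ)..(2*π),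
        Complex.exp (((((k+1:ℤ)):ℝ)*θ :ℝ) * Complex.I) * g₁ (circleMap 0 ε θ) with hS1def
    set S2 := ∫ θ in (0:ℝ)..(2*π),
        Complex.exp (((((k-1:ℤ)):ℝ)*θ :ℝ) * Complex.I) * g₂ (circleMap 0 ε θ) with hS2def
    have hXval : ((k:ℂ)*Complex.I) * X = -((ε:ℂ) * (S1 + S2)) := by linear_combination hibp
    have hX2 : X = -((ε:ℂ) * (S1+S2)) / ((k:ℂ)*Complex.I) := by
      rw [eq_div_iff hkI]; linear_combination hXval
    rw [hX2, pow_succ, inv_neg, mul_inv, div_eq_mul_inv]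
    have h2 : (ε:ℂ)⁻¹ * (ε:ℂ) = 1 := inv_mul_cancel₀ hεne
    linear_combination (((ε:ℂ)^m)⁻¹ * (((k:ℂ)*Complex.I)⁻¹) * (S1+S2)) * h2

/-- Let `f` be a smooth complex-valued function defined on a neighborhood
of `0 : ℂ` and let `n` be a positive integer.  Then the limit as `ε → 0⁺` of the contour
integral over the circle `|z| = ε` (counter-clockwise) of `f(z) dz̄ / zⁿ` equals `0`.
The line integral of the `(0,1)`-form `f(z) z⁻ⁿ dz̄` along the counter-clockwise circle of
radius `ε` is written out as `∫ θ in 0..2π, conj ((circleMap 0 ε)' θ) * f(circleMap 0 ε θ) / (circleMap 0 ε θ)ⁿ`. -/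
theorem limit_circle_antiholomorphic_integral_vanishes
    (f : ℂ → ℂ) (U : Set ℂ) (hU : IsOpen U) (h0 : (0 : ℂ) ∈ U)
    (hf : ContDiffOn ℝ (⊤ : ℕ∞) f U) (n : ℕ) (hn : 0 < n) :
    Tendsto
      (fun ε : ℝ =>
        ∫ θ in (0:ℝ)..(2 * π),
          (starRingEnd ℂ) (deriv (circleMap 0 ε) θ) *
            (f (circleMap 0 ε θ) / (circleMap 0 ε θ) ^ n))
      (𝓝[>] (0:ℝ)) (𝓝 0) := by
  have habs : ((n-1 : ℕ) : ℤ) < |(-(n+1 : ℤ))| := by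
    rw [_root_.abs_neg, _root_.abs_of_nonneg (by positivity : (0:ℤ) ≤ (n:ℤ)+1)]
    omega
  have H := key_lemma U hU h0 (n-1) (-(n+1 : ℤ)) habs f hf
  have Hc := H.const_mul (-Complex.I)
  rw [mul_zero] at Hc
  apply Tendsto.congr' _ Hc
  filter_upwards [self_mem_nhdsWithin] with ε hε
  have hε0 : (0:ℝ) < ε := hε
  have hεne : (ε:ℂ) ≠ 0 := by exact_mod_cast ne_of_gt hε0
  rw [← mul_assoc, ← intervalIntegral.integral_const_mul]
  apply intervalIntegral.integral_congr
  intro θ _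
  dsimp only
  rw [deriv_circleMap]
  simp only [circleMap, zero_add]
  rw [map_mul, map_mul, Complex.conj_I, Complex.conj_ofReal, ← Complex.exp_conj, map_mul,
    Complex.conj_ofReal, Complex.conj_I, mul_pow, ← Complex.exp_nat_mul]
  have hpow : (ε:ℂ)^n = (ε:ℂ)^(n-1) * ε := by
    rw [← pow_succ, Nat.sub_add_cancel hn]
  have hE : Complex.exp ((((((-((n:ℤ)+1)) : ℤ)):ℝ)*θ :ℝ) * Complex.I)
      = Complex.exp ((θ:ℂ) * (-Complex.I)) * Complex.exp (-((n:ℂ) * ((θ:ℂ)*Complex.I))) := by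
    rw [← Complex.exp_add]; congr 1; push_cast; ring
  rw [hpow, hE]
  rw [div_eq_mul_inv, mul_inv, mul_inv, Complex.exp_neg]
  field_simp
end

section
/- Let f be a smooth complex-valued function defined on a neighborhood of 0 in ℂ and let n be a positive integer. Then the limit as ε → 0 of the contour integral over the circle |z| = ε (counter-clockwise) of f(z) dz / z^n equals (2πi / (n-1)!) · (∂_z^{n-1} f)(0), where ∂_z = (∂_x - i∂_y)/2 is the Wirtinger derivative. -/
open Complex Filter Real Topology Asymptotics
open scoped ContDiff

/-- The Wirtinger derivative `∂_z f = (∂_x f - i ∂_y f)/2` of a (real-)differentiable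
function `f : ℂ → ℂ`. -/
noncomputable def wirtingerDeriv (f : ℂ → ℂ) (z : ℂ) : ℂ :=
  (fderiv ℝ f z 1 - Complex.I * fderiv ℝ f z Complex.I) / 2

noncomputable def wdC (f : ℂ → ℂ) (z : ℂ) : ℂ :=
  (fderiv ℝ f z 1 + Complex.I * fderiv ℝ f z Complex.I) / 2

lemma fderiv_apply_wd (f : ℂ → ℂ) (z w : ℂ) :
    fderiv ℝ f z w = wirtingerDeriv f z * w + wdC f z * (starRingEnd ℂ) w := by
  set x := w.re with hx
  set y := w.im with hy
  have h1 : fderiv ℝ f z w = x • fderiv ℝ f z 1 + y • fderiv ℝ f z Complex.I := by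
    rw [← ContinuousLinearMap.map_smul, ← ContinuousLinearMap.map_smul, ← map_add]
    congr 1
    simp [Complex.real_smul, hx, hy, Complex.re_add_im]
  have hw : w = (x : ℂ) + y * Complex.I := (Complex.re_add_im w).symm
  rw [h1, hw]
  simp only [wirtingerDeriv, wdC, Complex.real_smul, map_add, map_mul, Complex.conj_ofReal,
    Complex.conj_I]
  ring_nf
  rw [Complex.I_sq]
  ring

lemma wd_smooth {f : ℂ → ℂ} {U : Set ℂ} (hU : IsOpen U) (hf : ContDiffOn ℝ ∞ f U) :
    ContDiffOn ℝ ∞ (wirtingerDeriv f) U ∧ ContDiffOn ℝ ∞ (wdC f) U := by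
  have hd : ContDiffOn ℝ ∞ (fderiv ℝ f) U := hf.fderiv_of_isOpen hU (by simp)
  have h1 : ContDiffOn ℝ ∞ (fun z => fderiv ℝ f z 1) U := hd.clm_apply contDiffOn_const
  have h2 : ContDiffOn ℝ ∞ (fun z => fderiv ℝ f z Complex.I) U := hd.clm_apply contDiffOn_const
  constructor
  · exact (h1.sub (contDiffOn_const.mul h2)).div_const 2
  · exact (h1.add (contDiffOn_const.mul h2)).div_const 2

lemma circleInt_inv_pow (k : ℕ) {ε : ℝ} (hε : 0 < ε) :
    (∮ z in C(0, ε), (z ^ k)⁻¹) = if k = 1 then 2 * π * Complex.I else 0 := by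
  have hcongr : (∮ z in C(0, ε), (z ^ k)⁻¹) = ∮ z in C(0, ε), (z - 0) ^ (-(k:ℤ)) := by
    refine circleIntegral.integral_congr hε.le fun z hz => ?_
    simp [zpow_neg]
  rw [hcongr]
  split_ifs with h
  · subst h
    have := circleIntegral.integral_sub_inv_of_mem_ball (c := 0) (w := 0) (R := ε)
      (by simpa using hε)
    simpa using this
  · exact circleIntegral.integral_sub_zpow_of_ne (by omega) _ _ _

lemma circleIntegral_add {f g : ℂ → ℂ} {c : ℂ} {R : ℝ} (hf : CircleIntegrable f c R)
    (hg : CircleIntegrable g c R) :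
    (∮ z in C(c, R), f z + g z) = (∮ z in C(c, R), f z) + ∮ z in C(c, R), g z := by
  simp only [circleIntegral, smul_add, intervalIntegral.integral_add hf.out hg.out]

lemma ibp {f : ℂ → ℂ} {U : Set ℂ} (hU : IsOpen U) (hf : ContDiffOn ℝ ∞ f U)
    {ε : ℝ} (hε : 0 < ε) (hsub : Metric.sphere (0:ℂ) ε ⊆ U) {k : ℕ} (hk : 1 ≤ k) :
    ((k : ℂ) - 1) * (∮ z in C(0, ε), f z / z ^ k)
      = (∮ z in C(0, ε), wirtingerDeriv f z / z ^ (k-1))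
        - (ε:ℂ)^2 * ∮ z in C(0, ε), wdC f z / z ^ (k+1) := by
  set c : ℝ → ℂ := circleMap 0 ε with hc
  have hmem : ∀ θ : ℝ, c θ ∈ U := fun θ => hsub (circleMap_mem_sphere 0 hε.le θ)
  have hz0 : ∀ θ : ℝ, c θ ≠ 0 := fun θ => circleMap_ne_center hε.ne'
  have hcont_c : Continuous c := continuous_circleMap 0 ε
  have hfc : Continuous (fun θ => f (c θ)) :=
    (hf.continuousOn.comp_continuous hcont_c hmem)
  have hwd : Continuous (fun θ => wirtingerDeriv f (c θ)) :=
    ((wd_smooth hU hf).1.continuousOn.comp_continuous hcont_c hmem)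
  have hwdc : Continuous (fun θ => wdC f (c θ)) :=
    ((wd_smooth hU hf).2.continuousOn.comp_continuous hcont_c hmem)
  -- the three integrands, as θ-functions
  set A : ℝ → ℂ := fun θ => (c θ * Complex.I) • (wirtingerDeriv f (c θ) / (c θ) ^ (k-1)) with hA
  set B : ℝ → ℂ := fun θ => -((ε:ℂ)^2) * ((c θ * Complex.I) • (wdC f (c θ) / (c θ) ^ (k+1)))
    with hB
  set C : ℝ → ℂ := fun θ => ((1:ℂ) - (k:ℂ)) * ((c θ * Complex.I) • (f (c θ) / (c θ) ^ k)) with hC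
  have hintA : IntervalIntegrable A MeasureTheory.volume 0 (2*π) := by
    apply Continuous.intervalIntegrable
    exact (hcont_c.mul continuous_const).smul (hwd.div (hcont_c.pow _) (fun θ =>
      pow_ne_zero _ (hz0 θ)))
  have hintB : IntervalIntegrable B MeasureTheory.volume 0 (2*π) := by
    apply Continuous.intervalIntegrable
    exact continuous_const.mul ((hcont_c.mul continuous_const).smul
      (hwdc.div (hcont_c.pow _) (fun θ => pow_ne_zero _ (hz0 θ))))
  have hintC : IntervalIntegrable C MeasureTheory.volume 0 (2*π) := by
    apply Continuous.intervalIntegrable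
    exact continuous_const.mul ((hcont_c.mul continuous_const).smul
      (hfc.div (hcont_c.pow _) (fun θ => pow_ne_zero _ (hz0 θ))))
  -- derivative of φ θ = f (c θ) * (c θ)^(1-k)
  have hderiv : ∀ θ : ℝ, HasDerivAt (fun t => f (c t) * (c t) ^ (1 - (k:ℤ)))
      (A θ + B θ + C θ) θ := by
    intro θ
    have hcd : HasDerivAt c (c θ * Complex.I) θ := by
      simpa [hc, circleMap, zero_add] using hasDerivAt_circleMap 0 ε θ
    have hdf : DifferentiableAt ℝ f (c θ) :=
      (hf.differentiableOn (by simp)).differentiableAt (hU.mem_nhds (hmem θ))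
    have h1 : HasDerivAt (fun t => f (c t)) (fderiv ℝ f (c θ) (c θ * Complex.I)) θ :=
      (hdf.hasFDerivAt.comp_hasDerivAt θ hcd)
    have h2 : HasDerivAt (fun t => (c t) ^ (1 - (k:ℤ)))
        (((1 - (k:ℤ)):ℂ) * (c θ) ^ (1 - (k:ℤ) - 1) * (c θ * Complex.I)) θ := by
      have := (hasDerivAt_zpow (1 - (k:ℤ)) (c θ) (Or.inl (hz0 θ))).comp θ hcd
      simpa [Function.comp_def] using this
    have h3 := h1.mul h2
    refine h3.congr_deriv ?_
    symm
    have hz : c θ ≠ 0 := hz0 θ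
    have habs : ‖c θ‖ = ε := by
      rw [hc]; simpa using _root_.abs_of_pos hε
    have hconj : (starRingEnd ℂ) (c θ) = (ε:ℂ)^2 / (c θ) := by
      rw [eq_div_iff hz, mul_comm, Complex.mul_conj]
      rw [← Complex.sq_norm, habs]
      norm_cast
    have e1 : (c θ) ^ (1 - (k:ℤ)) = c θ / (c θ) ^ k := by
      rw [zpow_sub₀ hz, zpow_one, zpow_natCast]
    have e2 : (c θ) ^ (1 - (k:ℤ) - 1) = ((c θ) ^ k)⁻¹ := by
      rw [show (1 - (k:ℤ) - 1) = -(k:ℤ) by ring, zpow_neg, zpow_natCast]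
    have hzk1 : (c θ) ^ (k+1) = (c θ) ^ (k-1) * c θ * c θ := by
      rw [← pow_succ, ← pow_succ]; congr 1; omega
    have hzk : (c θ) ^ k = (c θ) ^ (k-1) * c θ := by
      rw [← pow_succ]; congr 1; omega
    rw [fderiv_apply_wd, map_mul, Complex.conj_I, hconj, e1, e2]
    simp only [hA, hB, hC, smul_eq_mul]
    rw [hzk1, hzk]
    have hw : (c θ) ^ (k-1) ≠ 0 := pow_ne_zero _ hz
    generalize hgw : (c θ) ^ (k - 1) = w at hw ⊢
    field_simp
    push_cast
    ring
  have hphi : (∫ θ in (0:ℝ)..(2*π), (A θ + B θ + C θ)) = 0 := by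
    rw [intervalIntegral.integral_eq_sub_of_hasDerivAt (fun θ _ => hderiv θ)
      (((hintA.add hintB).add hintC))]
    have : c (2*π) = c 0 := by
      simpa using (periodic_circleMap 0 ε).eq
    rw [this, sub_self]
  rw [intervalIntegral.integral_add (hintA.add hintB) hintC,
    intervalIntegral.integral_add hintA hintB] at hphi
  have eA : (∫ θ in (0:ℝ)..(2*π), A θ) = ∮ z in C(0, ε), wirtingerDeriv f z / z ^ (k-1) := by
    simp [circleIntegral, hA, deriv_circleMap, hc]
  have eB : (∫ θ in (0:ℝ)..(2*π), B θ)
      = -((ε:ℂ)^2) * ∮ z in C(0, ε), wdC f z / z ^ (k+1) := by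
    rw [hB]
    rw [intervalIntegral.integral_const_mul]
    simp [circleIntegral, deriv_circleMap, hc]
  have eC : (∫ θ in (0:ℝ)..(2*π), C θ) = ((1:ℂ) - (k:ℂ)) * ∮ z in C(0, ε), f z / z ^ k := by
    rw [hC, intervalIntegral.integral_const_mul]
    simp [circleIntegral, deriv_circleMap, hc]
  rw [eA, eB, eC] at hphi
  linear_combination -hphi

set_option maxHeartbeats 2000000 in
lemma peano {f : ℂ → ℂ} {U : Set ℂ} (hU : IsOpen U) (h0 : (0:ℂ) ∈ U)
    (hf : ContDiffOn ℝ ∞ f U) {n m : ℕ} (hn : 1 ≤ n) (hnm : n ≤ m + 2) :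
    Tendsto (fun ε : ℝ => (ε:ℂ)^(2*m) * ∮ z in C(0,ε), f z / z^(n+m)) (𝓝[>] (0:ℝ))
      (𝓝 (if m = 0 then (2*π*Complex.I/(Nat.factorial (n-1) : ℂ)) * (wirtingerDeriv^[n-1] f) 0
        else 0)) := by
  set k := n + m with hk
  set a := wirtingerDeriv f 0 with ha
  set b := wdC f 0 with hb
  obtain ⟨r, hr0, hrU⟩ : ∃ r > 0, Metric.ball (0:ℂ) r ⊆ U := Metric.isOpen_iff.mp hU 0 h0
  have hdf : HasFDerivAt f (fderiv ℝ f 0) 0 :=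
    ((hf.differentiableOn (by simp)).differentiableAt (hU.mem_nhds h0)).hasFDerivAt
  set R : ℂ → ℂ := fun z => f z - f 0 - fderiv ℝ f 0 z with hRdef
  have hR : R =o[𝓝 (0:ℂ)] fun z => z := by
    have := hasFDerivAt_iff_isLittleO_nhds_zero.mp hdf
    simpa [hRdef] using this
  -- splitting of the integral, eventually in ε
  have hsplit : ∀ ε : ℝ, 0 < ε → ε < r →
      (∮ z in C(0,ε), f z / z^k)
        = f 0 * (∮ z in C(0,ε), (z^k)⁻¹) + a * (∮ z in C(0,ε), (z^(k-1))⁻¹)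
          + ((ε:ℂ)^2 * b) * (∮ z in C(0,ε), (z^(k+1))⁻¹)
          + (∮ z in C(0,ε), R z * (z^k)⁻¹) := by
    intro ε hε hεr
    have hsub : Metric.sphere (0:ℂ) ε ⊆ U := fun z hz =>
      hrU (by simp only [Metric.mem_sphere] at hz; simp [Metric.mem_ball, hz, hεr])
    have habs : ∀ z ∈ Metric.sphere (0:ℂ) ε, ‖z‖ = ε := by
      intro z hz; simpa [Complex.dist_eq] using hz
    have hzne : ∀ z ∈ Metric.sphere (0:ℂ) ε, z ≠ 0 := by
      intro z hz h
      rw [h] at hz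
      simp only [Metric.mem_sphere, dist_self] at hz
      exact hε.ne' hz.symm
    have hcongr : Set.EqOn (fun z => f z / z^k)
        (fun z => (f 0 * (z^k)⁻¹ + a * (z^(k-1))⁻¹) + ((ε:ℂ)^2 * b) * (z^(k+1))⁻¹
          + R z * (z^k)⁻¹) (Metric.sphere (0:ℂ) ε) := by
      intro z hz
      have hz0 : z ≠ 0 := hzne z hz
      have hfz : f z = f 0 + (a * z + b * (starRingEnd ℂ) z) + R z := by
        simp only [hRdef]
        rw [fderiv_apply_wd]
        ring
      have hconj : (starRingEnd ℂ) z = (ε:ℂ)^2 / z := by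
        rw [eq_div_iff hz0, mul_comm, Complex.mul_conj, ← Complex.sq_norm, habs z hz]
        norm_cast
      have hzk : z ^ k = z ^ (k-1) * z := by rw [← pow_succ]; congr 1; omega
      have hzk1 : z ^ (k+1) = z ^ k * z := by rw [← pow_succ]
      simp only
      rw [hfz, hconj]
      simp only [div_eq_mul_inv]
      rw [hzk1, hzk]
      simp only [mul_inv]
      linear_combination (a * ((z^(k-1))⁻¹)) * mul_inv_cancel₀ hz0
    rw [circleIntegral.integral_congr hε.le hcongr]
    have hcpow : ∀ j : ℕ, ContinuousOn (fun z : ℂ => (z^j)⁻¹) (Metric.sphere (0:ℂ) ε) :=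
      fun j => (continuousOn_pow j).inv₀ (fun z hz => pow_ne_zero _ (hzne z hz))
    have q1 : CircleIntegrable (fun z : ℂ => f 0 * (z^k)⁻¹) 0 ε :=
      (continuousOn_const.mul (hcpow k)).circleIntegrable hε.le
    have q2 : CircleIntegrable (fun z : ℂ => a * (z^(k-1))⁻¹) 0 ε :=
      (continuousOn_const.mul (hcpow (k-1))).circleIntegrable hε.le
    have q3 : CircleIntegrable (fun z : ℂ => ((ε:ℂ)^2 * b) * (z^(k+1))⁻¹) 0 ε :=
      (continuousOn_const.mul (hcpow (k+1))).circleIntegrable hε.le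
    have hcontR : ContinuousOn R (Metric.sphere (0:ℂ) ε) := by
      apply ContinuousOn.sub
      apply ContinuousOn.sub (hf.continuousOn.mono hsub) continuousOn_const
      exact (fderiv ℝ f 0).continuous.continuousOn
    have q4 : CircleIntegrable (fun z : ℂ => R z * (z^k)⁻¹) 0 ε :=
      (hcontR.mul (hcpow k)).circleIntegrable hε.le
    have q12 : CircleIntegrable (fun z : ℂ => f 0 * (z^k)⁻¹ + a * (z^(k-1))⁻¹) 0 ε :=
      q1.add q2
    have q123 : CircleIntegrable (fun z : ℂ => f 0 * (z^k)⁻¹ + a * (z^(k-1))⁻¹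
        + ((ε:ℂ)^2 * b) * (z^(k+1))⁻¹) 0 ε := q12.add q3
    rw [circleIntegral_add q123 q4, circleIntegral_add q12 q3, circleIntegral_add q1 q2,
      circleIntegral.integral_const_mul, circleIntegral.integral_const_mul,
      circleIntegral.integral_const_mul]
  set Cst : ℂ := f 0 * (if k = 1 then 2*π*Complex.I else 0)
      + a * (if k - 1 = 1 then 2*π*Complex.I else 0) with hCst
  set M : ℝ → ℂ := fun ε => (ε:ℂ)^(2*m) * Cst with hM
  set E : ℝ → ℂ := fun ε => (ε:ℂ)^(2*m) * ∮ z in C(0,ε), R z * (z^k)⁻¹ with hE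
  have heq : (fun ε => M ε + E ε) =ᶠ[𝓝[>] (0:ℝ)]
      (fun ε : ℝ => (ε:ℂ)^(2*m) * ∮ z in C(0,ε), f z / z^k) := by
    filter_upwards [Ioo_mem_nhdsGT_of_mem (Set.left_mem_Ico.mpr hr0)] with ε hε
    rw [hsplit ε hε.1 hε.2, hM, hE, hCst, circleInt_inv_pow k hε.1,
      circleInt_inv_pow (k-1) hε.1, circleInt_inv_pow (k+1) hε.1,
      if_neg (by omega : ¬(k+1=1))]
    ring
  have hMlim : Tendsto M (𝓝[>] (0:ℝ))
      (𝓝 (if m = 0 then (2*π*Complex.I/(Nat.factorial (n-1) : ℂ))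
        * (wirtingerDeriv^[n-1] f) 0 else 0)) := by
    rcases Nat.eq_zero_or_pos m with hm0 | hm1
    · subst hm0
      rw [if_pos rfl]
      have hMconst : M = fun _ => Cst := by
        funext ε; rw [hM]; norm_num
      rw [hMconst]
      have hkn : k = n := by omega
      have hn2 : n ≤ 2 := by omega
      interval_cases n
      · have : Cst = 2*π*Complex.I * f 0 := by
          rw [hCst, if_pos (by omega : k = 1), if_neg (by omega : ¬(k-1=1))]
          ring
        rw [this]
        simp [Nat.factorial]
      · have : Cst = 2*π*Complex.I * a := by
          rw [hCst, if_neg (by omega : ¬(k = 1)), if_pos (by omega : k-1 = 1)]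
          ring
        rw [this]
        simp [Nat.factorial, ha]
    · rw [if_neg (by omega : ¬(m = 0))]
      have h1 : Tendsto (fun ε : ℝ => ((ε:ℂ))) (𝓝[>] (0:ℝ)) (𝓝 0) := by
        have := (Complex.continuous_ofReal.tendsto 0).mono_left
          (nhdsWithin_le_nhds (s := Set.Ioi (0:ℝ)))
        simpa using this
      have := (h1.pow (2*m)).mul_const Cst
      rw [zero_pow (by omega : 2*m ≠ 0), zero_mul] at this
      exact this
  have hElim : Tendsto E (𝓝[>] (0:ℝ)) (𝓝 0) := by
    rw [NormedAddCommGroup.tendsto_nhds_zero]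
    intro δ hδ
    have hπ := Real.pi_pos
    set cδ : ℝ := δ / (2*π+1) with hcδ
    have hc : 0 < cδ := by positivity
    have hRb := Asymptotics.isLittleO_iff.mp hR hc
    rw [Metric.eventually_nhds_iff] at hRb
    obtain ⟨ρ, hρ, hball⟩ := hRb
    have hmin : (0:ℝ) < min ρ (min r 1) := by positivity
    filter_upwards [Ioo_mem_nhdsGT_of_mem (Set.left_mem_Ico.mpr hmin)] with ε hεm
    obtain ⟨hε0, hεlt⟩ := hεm
    have hερ : ε < ρ := lt_of_lt_of_le hεlt (min_le_left _ _)
    have hε1 : ε ≤ 1 := le_of_lt (lt_of_lt_of_le hεlt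
      ((min_le_right _ _).trans (min_le_right _ _)))
    have hb : ∀ z ∈ Metric.sphere (0:ℂ) ε, ‖R z * (z^k)⁻¹‖ ≤ cδ * ε / ε^k := by
      intro z hz
      have hzn : ‖z‖ = ε := by simpa [Complex.dist_eq] using hz
      have hz0 : z ≠ 0 := by
        intro h; rw [h] at hzn; simp at hzn; exact hε0.ne' hzn.symm
      have hRz : ‖R z‖ ≤ cδ * ε := by
        have := hball (show dist z 0 < ρ by rw [dist_zero_right, hzn]; exact hερ)
        simpa [hzn] using this
      rw [norm_mul, norm_inv, norm_pow, hzn, div_eq_mul_inv]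
      apply mul_le_mul_of_nonneg_right hRz
      positivity
    have hIb := circleIntegral.norm_integral_le_of_norm_le_const hε0.le hb
    have hnormE : ‖E ε‖ = ε^(2*m) * ‖∮ z in C(0,ε), R z * (z^k)⁻¹‖ := by
      rw [hE]
      simp only [norm_mul, norm_pow, Complex.norm_real, Real.norm_eq_abs,
        _root_.abs_of_pos hε0]
    have hεk : (0:ℝ) < ε^k := pow_pos hε0 k
    have hkle : k ≤ 2*m+2 := by omega
    calc ‖E ε‖ = ε^(2*m) * ‖∮ z in C(0,ε), R z * (z^k)⁻¹‖ := hnormE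
      _ ≤ ε^(2*m) * (2*π*ε*(cδ * ε / ε^k)) := by
          apply mul_le_mul_of_nonneg_left hIb (pow_nonneg hε0.le _)
      _ = 2*π*cδ*(ε^(2*m+2)/ε^k) := by
          field_simp
          ring
      _ ≤ 2*π*cδ*1 := by
          apply mul_le_mul_of_nonneg_left _ (by positivity)
          rw [div_le_one hεk]
          exact pow_le_pow_of_le_one hε0.le hε1 hkle
      _ < δ := by
          rw [mul_one, hcδ]
          have h2 : 2*π*(δ/(2*π+1)) = (2*π*δ)/(2*π+1) := by ring
          rw [h2, div_lt_iff₀ (by positivity : (0:ℝ) < 2*π+1)]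
          nlinarith
  have := (hMlim.add hElim).congr' heq
  simpa using this

lemma key : ∀ N n m : ℕ, ∀ f : ℂ → ℂ, ∀ U : Set ℂ, IsOpen U → (0:ℂ) ∈ U →
    ContDiffOn ℝ ∞ f U → 1 ≤ n → 2*n ≤ N + m →
    Tendsto (fun ε : ℝ => (ε:ℂ)^(2*m) * ∮ z in C(0,ε), f z / z^(n+m)) (𝓝[>] (0:ℝ))
      (𝓝 (if m = 0 then (2*π*Complex.I/(Nat.factorial (n-1) : ℂ))
        * (wirtingerDeriv^[n-1] f) 0 else 0)) := by
  intro N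
  induction N with
  | zero =>
    intro n m f U hU h0 hf hn hN
    exact peano hU h0 hf hn (by omega)
  | succ N IH =>
    intro n m f U hU h0 hf hn hN
    by_cases hbase : n ≤ m + 2
    · exact peano hU h0 hf hn hbase
    · have hwd := wd_smooth hU hf
      have IH1 := IH (n-1) m (wirtingerDeriv f) U hU h0 hwd.1 (by omega) (by omega)
      have IH2 := IH n (m+1) (wdC f) U hU h0 hwd.2 hn (by omega)
      obtain ⟨r, hr0, hrU⟩ := Metric.isOpen_iff.mp hU 0 h0
      set K : ℂ := ((n+m : ℕ):ℂ) - 1 with hK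
      have hKne : K ≠ 0 := by
        rw [hK]
        apply sub_ne_zero.mpr
        exact_mod_cast (by omega : (n+m) ≠ 1)
      have hev : (fun ε : ℝ => K⁻¹ * ((ε:ℂ)^(2*m)
            * (∮ z in C(0,ε), wirtingerDeriv f z / z^((n-1)+m))
            - (ε:ℂ)^(2*(m+1)) * ∮ z in C(0,ε), wdC f z / z^(n+(m+1))))
          =ᶠ[𝓝[>] (0:ℝ)]
          (fun ε : ℝ => (ε:ℂ)^(2*m) * ∮ z in C(0,ε), f z / z^(n+m)) := by
        filter_upwards [Ioo_mem_nhdsGT_of_mem (Set.left_mem_Ico.mpr hr0)] with ε hε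
        obtain ⟨hε0, hεr⟩ := hε
        have hsub : Metric.sphere (0:ℂ) ε ⊆ U := fun z hz => by
          apply hrU
          simp only [Metric.mem_sphere] at hz
          simp [Metric.mem_ball, hz, hεr]
        have hibp := ibp hU hf hε0 hsub (show 1 ≤ n + m by omega)
        rw [show n+m-1 = (n-1)+m by omega, show n+m+1 = n+(m+1) by omega] at hibp
        rw [← hK] at hibp
        symm
        linear_combination (K⁻¹ * (ε:ℂ)^(2*m)) * hibp
          - ((ε:ℂ)^(2*m) * (∮ z in C(0,ε), f z / z^(n+m))) * (mul_inv_cancel₀ hKne)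
      have hcomb := ((IH1.sub IH2).const_mul K⁻¹).congr' hev
      convert hcomb using 2
      rw [if_neg (by omega : ¬(m+1 = 0))]
      rcases Nat.eq_zero_or_pos m with hm0 | hm1
      · subst hm0
        rw [if_pos rfl, if_pos rfl]
        rw [show n - 1 - 1 = n - 2 by omega]
        rw [show n - 1 = (n-2)+1 by omega, Function.iterate_succ_apply,
          Nat.factorial_succ, hK]
        have hcast : ((n - 2 : ℕ):ℂ) = (n:ℂ) - 2 := by
          push_cast [Nat.cast_sub (by omega : 2 ≤ n)]
          ring
        push_cast
        rw [hcast, show ((n:ℂ) + 0 - 1) = (n:ℂ) - 1 by ring,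
          show (n:ℂ) - 2 + 1 = (n:ℂ) - 1 by ring]
        have hfne : ((n-2).factorial : ℂ) ≠ 0 :=
          Nat.cast_ne_zero.mpr (Nat.factorial_ne_zero _)
        have hne1 : (n:ℂ) - 1 ≠ 0 := by
          apply sub_ne_zero.mpr
          exact_mod_cast (by omega : n ≠ 1)
        field_simp
        ring
      · rw [if_neg (by omega : ¬(m = 0)), if_neg (by omega : ¬(m = 0))]
        simp

/-- Let `f` be a smooth complex-valued function defined on a neighborhood
of `0 : ℂ` and let `n` be a positive integer.  Then the limit as `ε → 0⁺` of the contour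
integral over the circle `|z| = ε` (counter-clockwise) of `f(z) dz / zⁿ` equals
`(2πi / (n-1)!) ⬝ (∂_z^{n-1} f)(0)`, where `∂_z = (∂_x - i∂_y)/2` is the Wirtinger
derivative. -/
theorem limit_circle_holomorphic_integral
    (f : ℂ → ℂ) (U : Set ℂ) (hU : IsOpen U) (h0 : (0 : ℂ) ∈ U)
    (hf : ContDiffOn ℝ (⊤ : ℕ∞) f U) (n : ℕ) (hn : 0 < n) :
    Tendsto (fun ε : ℝ => ∮ z in C(0, ε), f z / z ^ n) (𝓝[>] (0:ℝ))
      (𝓝 ((2 * π * Complex.I / (Nat.factorial (n - 1) : ℂ)) *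
        (wirtingerDeriv^[n - 1] f) 0)) := by
  have hf' : ContDiffOn ℝ ∞ f U := hf.of_le (by simp)
  have := key (2*n) n 0 f U hU h0 hf' hn (by omega)
  simpa using this
end

section
/- For the smooth differential 1-forms θ_{ab} = d(z_a - z_b)/(z_a - z_b) on the configuration space of distinct points z_1, ..., z_n in ℂ (away from diagonals), the Arnold relation θ_{ij} ∧ θ_{jk} + θ_{jk} ∧ θ_{ki} + θ_{ki} ∧ θ_{ij} = 0 holds for any pairwise distinct indices i, j, k. -/
/-- **Arnold relation.** On the configuration space of `n` points in `ℂ`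
(away from the diagonals), the holomorphic 1-forms `θ_{ab} = (dz_a - dz_b)/(z_a - z_b)`
satisfy `θ_{ij} ∧ θ_{jk} + θ_{jk} ∧ θ_{ki} + θ_{ki} ∧ θ_{ij} = 0` for pairwise distinct
`i, j, k`.  At a point `z` the 1-form `θ_{ab}` is the linear functional
`v ↦ (v a - v b)/(z a - z b)` on tangent vectors `v : Fin n → ℂ`, and the wedge of two
1-forms `α, β` is the 2-form `(v, w) ↦ α v * β w - α w * β v`; the Arnold relation is the
statement that the corresponding 2-form vanishes on every pair of tangent vectors. -/
theorem arnold_relation {n : ℕ} (i j k : Fin n)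
    (hij : i ≠ j) (hjk : j ≠ k) (hik : i ≠ k)
    (z : Fin n → ℂ) (h1 : z i ≠ z j) (h2 : z j ≠ z k) (h3 : z k ≠ z i)
    (v w : Fin n → ℂ) :
    (((v i - v j) / (z i - z j)) * ((w j - w k) / (z j - z k)) -
        ((w i - w j) / (z i - z j)) * ((v j - v k) / (z j - z k))) +
      (((v j - v k) / (z j - z k)) * ((w k - w i) / (z k - z i)) -
        ((w j - w k) / (z j - z k)) * ((v k - v i) / (z k - z i))) +
      (((v k - v i) / (z k - z i)) * ((w i - w j) / (z i - z j)) -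
        ((w k - w i) / (z k - z i)) * ((v i - v j) / (z i - z j))) = 0 := by
  have a : z i - z j ≠ 0 := sub_ne_zero.mpr h1
  have b : z j - z k ≠ 0 := sub_ne_zero.mpr h2
  have c : z k - z i ≠ 0 := sub_ne_zero.mpr h3
  have habc : (z i - z j) + (z j - z k) + (z k - z i) = 0 := by ring
  field_simp
  linear_combination (v i * w j - v j * w i + v j * w k - v k * w j + v k * w i - v i * w k) * habc
end

section
/- The q-series identity 2(2πi)⁴ ∑_{k≥1} k² q^k / (1 - q^k)² = (π⁴/9)(E₄(τ) - E₂(τ)²) holds for τ in the upper half-plane, where q = e^{2πiτ} and E₂, E₄ are the normalized Eisenstein series of weights 2 and 4. -/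
open Complex Real

/-- The normalized weight-2 Eisenstein series as a `q`-series:
`E₂ = 1 - 24 ∑_{n ≥ 1} σ₁(n) qⁿ`. -/
noncomputable def E₂ (q : ℂ) : ℂ :=
  1 - 24 * ∑' n : ℕ, (ArithmeticFunction.sigma 1 (n + 1) : ℂ) * q ^ (n + 1)

/-- The normalized weight-4 Eisenstein series as a `q`-series:
`E₄ = 1 + 240 ∑_{n ≥ 1} σ₃(n) qⁿ`. -/
noncomputable def E₄ (q : ℂ) : ℂ :=
  1 + 240 * ∑' n : ℕ, (ArithmeticFunction.sigma 3 (n + 1) : ℂ) * q ^ (n + 1)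

/-!
Write `uₙ = qⁿ / (1 - qⁿ)` and `Aₛ = ∑ nˢ uₙ = ∑ σₛ(n) qⁿ`. Since `qⁿ / (1 - qⁿ)² = uₙ + uₙ²`, the
identity reads `6 ∑ n² uₙ² = 5 A₃ - 6 A₂ + A₁ - 12 A₁²`, and it comes from the elementary relation
`uⱼ uₖ = uⱼ₊ₖ (1 + uⱼ + uₖ)`. Weight it by `f(j, k) = j² + jk + k²` and sum over `j, k ≥ 1`: this
gives `∑ f uⱼ uₖ = ∑ f uⱼ₊ₖ + 2 ∑ f(j, m) uⱼ uⱼ₊ₘ`. On the other hand `(f - 2jk) uⱼ uₖ` is symmetric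
and equals `f(j, m) uⱼ uⱼ₊ₘ` at `k = j + m`, so splitting its sum into `j < k`, `j > k` and `j = k`
gives `∑ f uⱼ uₖ - 2 A₁² = 2 ∑ f(j, m) uⱼ uⱼ₊ₘ + ∑ n² uₙ²`. Hence `∑ n² uₙ² = ∑ f uⱼ₊ₖ - 2 A₁²`,
and `∑ f uⱼ₊ₖ = ∑ₙ (5n³ - 6n² + n)/6 · uₙ` because `∑_{j+k=n} f(j, k) = (5n³ - 6n² + n)/6`.
-/

section DoubleSeries

open Finset

variable {E : Type*} [NormedAddCommGroup E]

lemma summable_of_norm_le_sq_mul_geometric [CompleteSpace E] {r C : ℝ} (hr₀ : 0 ≤ r)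
    (hr : r < 1) {F : ℕ+ × ℕ+ → E}
    (hF : ∀ p, ‖F p‖ ≤ C * ((p.1 : ℝ) ^ 2 * (p.2 : ℝ) ^ 2) * (r ^ (p.1 : ℕ) * r ^ (p.2 : ℕ))) :
    Summable F := by
  have hr' : ‖r‖ < 1 := by rwa [Real.norm_of_nonneg hr₀]
  have h := (summable_pow_mul_geometric_of_norm_lt_one 2 hr').comp_injective PNat.coe_injective
  have hnonneg (n : ℕ+) : 0 ≤ ((n : ℕ) : ℝ) ^ 2 * r ^ (n : ℕ) := by positivity
  refine .of_norm_bounded (((h.mul_of_nonneg h hnonneg hnonneg).mul_left C).congr fun p ↦ ?_) hF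
  simp only [Function.comp_apply]
  ring

lemma tsum_indicator_range {M ι κ : Type*} [AddCommMonoid M] [TopologicalSpace M] {g : κ → ι}
    (hg : g.Injective) (F : ι → M) :
    ∑' i, (Set.range g).indicator F i = ∑' k, F (g k) :=
  (_root_.tsum_subtype _ F).symm.trans (tsum_range F hg)

lemma PNat.exists_add_eq_iff_lt {a b : ℕ+} : (∃ d, a + d = b) ↔ a < b :=
  ⟨fun ⟨d, hd⟩ ↦ hd ▸ PNat.lt_add_right a d, fun h ↦ ⟨b - a, PNat.add_sub_of_lt h⟩⟩

lemma eq_indicator_add_indicator_add_indicator_pnat_prod (F : ℕ+ × ℕ+ → E) (p : ℕ+ × ℕ+) :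
    F p = (Set.range fun p : ℕ+ × ℕ+ ↦ (p.1, p.1 + p.2)).indicator F p +
      (Set.range fun p : ℕ+ × ℕ+ ↦ (p.1 + p.2, p.1)).indicator F p +
        (Set.range fun n : ℕ+ ↦ (n, n)).indicator F p := by
  obtain ⟨a, b⟩ := p
  have hU : (a, b) ∈ Set.range (fun p : ℕ+ × ℕ+ ↦ (p.1, p.1 + p.2)) ↔ a < b := by
    simp [Prod.ext_iff, PNat.exists_add_eq_iff_lt]
  have hL : (a, b) ∈ Set.range (fun p : ℕ+ × ℕ+ ↦ (p.1 + p.2, p.1)) ↔ b < a := by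
    simp [Prod.ext_iff, PNat.exists_add_eq_iff_lt]
  have hD : (a, b) ∈ Set.range (fun n : ℕ+ ↦ (n, n)) ↔ a = b := by
    simp [Prod.ext_iff, eq_comm]
  rcases lt_trichotomy a b with h | rfl | h
  · simp [Set.indicator, hU, hL, hD, h, h.ne, h.not_gt]
  · simp [Set.indicator, hU, hL, hD]
  · simp [Set.indicator, hU, hL, hD, h, h.ne', h.not_gt]

lemma tsum_pnat_prod_eq_of_symm [CompleteSpace E] {F : ℕ+ × ℕ+ → E} (hF : Summable F)
    (hsymm : ∀ m n, F (m, n) = F (n, m)) :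
    ∑' p, F p = 2 • ∑' p : ℕ+ × ℕ+, F (p.1, p.1 + p.2) + ∑' n, F (n, n) := by
  have hinjU : (fun p : ℕ+ × ℕ+ ↦ (p.1, p.1 + p.2)).Injective := fun a b h ↦ by
    simp only [Prod.mk.injEq] at h
    exact Prod.ext h.1 (by simpa [h.1] using h.2)
  have hinjL : (fun p : ℕ+ × ℕ+ ↦ (p.1 + p.2, p.1)).Injective := fun a b h ↦ by
    simp only [Prod.mk.injEq] at h
    exact Prod.ext h.2 (by simpa [h.2] using h.1)
  have hinjD : (fun n : ℕ+ ↦ (n, n)).Injective := fun a b h ↦ (Prod.mk.inj h).1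
  rw [tsum_congr (eq_indicator_add_indicator_add_indicator_pnat_prod F),
    Summable.tsum_add ((hF.indicator _).add (hF.indicator _)) (hF.indicator _),
    Summable.tsum_add (hF.indicator _) (hF.indicator _), tsum_indicator_range hinjU,
    tsum_indicator_range hinjL, tsum_indicator_range hinjD, two_smul]
  congr 2
  exact tsum_congr fun p ↦ hsymm _ _

lemma tsum_prod_eq_tsum_sum_antidiagonal [CompleteSpace E] {G : ℕ × ℕ → E} (hG : Summable G) :
    ∑' p, G p = ∑' n, ∑ p ∈ antidiagonal n, G p := by
  rw [← HasAntidiagonal.sigmaAntidiagonalEquivProd.tsum_eq]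
  exact ((Equiv.summable_iff _).2 hG).tsum_sigma.trans
    (tsum_congr fun n ↦ (tsum_fintype _).trans (sum_coe_sort _ _))

lemma tsum_pnat_prod_eq_tsum_sum_antidiagonal [CompleteSpace E] {G : ℕ+ × ℕ+ → E}
    (hG : Summable G) :
    ∑' p, G p = ∑' n : ℕ, ∑ p ∈ antidiagonal n, G (p.1.succPNat, p.2.succPNat) := by
  let e : ℕ × ℕ ≃ ℕ+ × ℕ+ := Equiv.pnatEquivNat.symm.prodCongr Equiv.pnatEquivNat.symm
  exact (e.tsum_eq G).symm.trans (tsum_prod_eq_tsum_sum_antidiagonal ((e.summable_iff).2 hG))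

lemma tsum_pnat_eq_tsum_add_two {M : Type*} [AddCommMonoid M] [TopologicalSpace M] {f : ℕ → M}
    (hf : f 1 = 0) :
    ∑' n : ℕ+, f n = ∑' m : ℕ, f (m + 2) := by
  have hg : Function.Injective fun m : ℕ ↦ (m + 1).succPNat := fun a b h ↦ by
    simpa using congrArg PNat.val h
  refine (hg.tsum_eq fun n hn ↦ ?_).symm
  have h2 : 2 ≤ (n : ℕ) := by
    by_contra h
    exact hn (show f n = 0 by rw [show (n : ℕ) = 1 by have := n.pos; omega, hf])
  exact ⟨n - 2, PNat.eq (by simp; omega)⟩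

lemma two_mul_sum_antidiagonal_succ (m : ℕ) :
    2 * ∑ p ∈ antidiagonal m, (p.2 + 1) = (m + 1) * (m + 2) := by
  induction m with
  | zero => simp
  | succ m ih => rw [Nat.sum_antidiagonal_succ, mul_add, ih]; ring

lemma six_mul_sum_antidiagonal_succ_mul_succ (m : ℕ) :
    6 * ∑ p ∈ antidiagonal m, (p.1 + 1) * (p.2 + 1) = (m + 1) * (m + 2) * (m + 3) := by
  induction m with
  | zero => simp
  | succ m ih =>
    have h := two_mul_sum_antidiagonal_succ m
    simp only [Nat.sum_antidiagonal_succ, add_mul, sum_add_distrib, one_mul] at *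
    linear_combination ih + 3 * h

lemma six_mul_sum_antidiagonal_sq_add_mul_add_sq (m : ℕ) :
    6 * ∑ p ∈ antidiagonal m, ((p.1 + 1) ^ 2 + (p.1 + 1) * (p.2 + 1) + (p.2 + 1) ^ 2) =
      (m + 1) * (m + 2) * (5 * m + 9) := by
  have h : ∑ p ∈ antidiagonal m, (((p.1 + 1) ^ 2 + (p.1 + 1) * (p.2 + 1) + (p.2 + 1) ^ 2) +
      (p.1 + 1) * (p.2 + 1)) = (m + 1) * (m + 2) ^ 2 := by
    rw [sum_congr rfl fun p hp ↦ ?_, sum_const, Nat.card_antidiagonal, smul_eq_mul]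
    rw [HasAntidiagonal.mem_antidiagonal] at hp
    rw [← hp]
    ring
  rw [sum_add_distrib] at h
  nlinarith [six_mul_sum_antidiagonal_succ_mul_succ m]

end DoubleSeries

section Lambert

variable {𝕜 : Type*} [NormedField 𝕜] {q : 𝕜}

lemma norm_natCast_le_self (n : ℕ) : ‖(n : 𝕜)‖ ≤ n := by
  simpa using Nat.norm_cast_le (α := 𝕜) n

noncomputable def lambertTerm (q : 𝕜) (n : ℕ) : 𝕜 := q ^ n / (1 - q ^ n)

noncomputable def lambertSeries (q : 𝕜) (s : ℕ) : 𝕜 :=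
  ∑' n : ℕ+, (n : 𝕜) ^ s * lambertTerm q n

lemma one_sub_pow_ne_zero (hq : ‖q‖ < 1) {n : ℕ} (hn : n ≠ 0) : 1 - q ^ n ≠ 0 := by
  intro h
  have : ‖q ^ n‖ < 1 := by rw [norm_pow]; exact pow_lt_one₀ (norm_nonneg q) hq hn
  rw [← sub_eq_zero.mp h, norm_one] at this
  exact this.false

lemma lambertTerm_mul_lambertTerm (hq : ‖q‖ < 1) {m n : ℕ} (hm : m ≠ 0) (hn : n ≠ 0) :
    lambertTerm q m * lambertTerm q n =
      lambertTerm q (m + n) * (1 + lambertTerm q m + lambertTerm q n) := by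
  have hmn := one_sub_pow_ne_zero hq (by omega : m + n ≠ 0)
  replace hm := one_sub_pow_ne_zero hq hm
  replace hn := one_sub_pow_ne_zero hq hn
  rw [pow_add] at hmn
  simp only [lambertTerm, pow_add]
  field_simp
  ring

lemma lambertTerm_add_sq (hq : ‖q‖ < 1) {n : ℕ} (hn : n ≠ 0) :
    lambertTerm q n + lambertTerm q n ^ 2 = q ^ n / (1 - q ^ n) ^ 2 := by
  have := one_sub_pow_ne_zero hq hn
  simp only [lambertTerm]
  field_simp
  ring

lemma norm_lambertTerm_le (hq : ‖q‖ < 1) (n : ℕ) :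
    ‖lambertTerm q n‖ ≤ (1 - ‖q‖)⁻¹ * ‖q‖ ^ n := by
  rcases eq_or_ne n 0 with rfl | hn
  · simp [lambertTerm, sub_nonneg.mpr hq.le]
  have hpow : ‖q‖ ^ n ≤ ‖q‖ := pow_le_of_le_one (norm_nonneg q) hq.le hn
  have hden : 1 - ‖q‖ ≤ ‖1 - q ^ n‖ := by
    calc 1 - ‖q‖ ≤ ‖(1 : 𝕜)‖ - ‖q ^ n‖ := by rw [norm_one, norm_pow]; linarith
      _ ≤ ‖1 - q ^ n‖ := norm_sub_norm_le _ _
  rw [lambertTerm, norm_div, norm_pow, inv_mul_eq_div]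
  gcongr

lemma summable_norm_pow_mul_lambertTerm (hq : ‖q‖ < 1) (s : ℕ) :
    Summable fun n : ℕ+ ↦ ‖(n : 𝕜) ^ s * lambertTerm q n‖ := by
  have hr : ‖‖q‖‖ < 1 := by rwa [norm_norm]
  refine .of_nonneg_of_le (fun _ ↦ norm_nonneg _) (fun n ↦ ?_)
    (((summable_pow_mul_geometric_of_norm_lt_one s hr).mul_left (1 - ‖q‖)⁻¹).comp_injective
      PNat.coe_injective)
  rw [norm_mul, norm_pow, Function.comp_apply, mul_left_comm]
  gcongr
  exacts [norm_natCast_le_self _, norm_lambertTerm_le hq _]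

lemma norm_sq_add_mul_add_sq_le (m n : ℕ+) :
    ‖(m : 𝕜) ^ 2 + m * n + n ^ 2‖ ≤ 3 * ((m : ℝ) ^ 2 * (n : ℝ) ^ 2) := by
  have hcast : (m : 𝕜) ^ 2 + m * n + n ^ 2 = ((m ^ 2 + m * n + n ^ 2 : ℕ) : 𝕜) := by push_cast; ring
  have hm : (1 : ℝ) ≤ m := Nat.one_le_cast.2 m.pos
  have hn : (1 : ℝ) ≤ n := Nat.one_le_cast.2 n.pos
  have hmn : 1 ≤ (m : ℝ) * n := one_le_mul_of_one_le_of_one_le hm hn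
  rw [hcast]
  refine (norm_natCast_le_self _).trans ?_
  push_cast
  nlinarith [one_le_pow₀ (n := 2) hm, one_le_pow₀ (n := 2) hn]

variable [CompleteSpace 𝕜]

lemma summable_sq_add_mul_add_sq_mul (hq : ‖q‖ < 1) {v : ℕ+ × ℕ+ → 𝕜} {K : ℝ}
    (hv : ∀ p, ‖v p‖ ≤ K * (‖q‖ ^ (p.1 : ℕ) * ‖q‖ ^ (p.2 : ℕ))) :
    Summable fun p : ℕ+ × ℕ+ ↦ ((p.1 : 𝕜) ^ 2 + p.1 * p.2 + p.2 ^ 2) * v p := by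
  refine summable_of_norm_le_sq_mul_geometric (norm_nonneg q) hq (C := 3 * K) fun p ↦ ?_
  rw [norm_mul]
  calc _ ≤ 3 * ((p.1 : ℝ) ^ 2 * (p.2 : ℝ) ^ 2) * (K * (‖q‖ ^ (p.1 : ℕ) * ‖q‖ ^ (p.2 : ℕ))) :=
        mul_le_mul (norm_sq_add_mul_add_sq_le p.1 p.2) (hv p) (norm_nonneg _) (by positivity)
    _ = _ := by ring

lemma summable_sq_add_mul_add_sq_mul_lambertTerm_mul (hq : ‖q‖ < 1) :
    Summable fun p : ℕ+ × ℕ+ ↦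
      ((p.1 : 𝕜) ^ 2 + p.1 * p.2 + p.2 ^ 2) * (lambertTerm q p.1 * lambertTerm q p.2) := by
  refine summable_sq_add_mul_add_sq_mul hq (K := (1 - ‖q‖)⁻¹ ^ 2) fun p ↦ ?_
  rw [norm_mul]
  calc _ ≤ (1 - ‖q‖)⁻¹ * ‖q‖ ^ (p.1 : ℕ) * ((1 - ‖q‖)⁻¹ * ‖q‖ ^ (p.2 : ℕ)) :=
        mul_le_mul (norm_lambertTerm_le hq _) (norm_lambertTerm_le hq _) (norm_nonneg _)
          (by have := sub_nonneg.2 hq.le; positivity)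
    _ = _ := by ring

lemma summable_sq_add_mul_add_sq_mul_lambertTerm_add (hq : ‖q‖ < 1) :
    Summable fun p : ℕ+ × ℕ+ ↦
      ((p.1 : 𝕜) ^ 2 + p.1 * p.2 + p.2 ^ 2) * lambertTerm q (p.1 + p.2) := by
  refine summable_sq_add_mul_add_sq_mul hq (K := (1 - ‖q‖)⁻¹) fun p ↦ ?_
  simpa only [pow_add] using norm_lambertTerm_le hq (p.1 + p.2)

lemma summable_sq_add_mul_add_sq_mul_lambertTerm_mul_add (hq : ‖q‖ < 1) :
    Summable fun p : ℕ+ × ℕ+ ↦ ((p.1 : 𝕜) ^ 2 + p.1 * p.2 + p.2 ^ 2) *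
      (lambertTerm q p.1 * lambertTerm q (p.1 + p.2)) := by
  refine summable_sq_add_mul_add_sq_mul hq (K := (1 - ‖q‖)⁻¹ ^ 2) fun p ↦ ?_
  have hpow : ‖q‖ ^ ((p.1 : ℕ) + p.2) ≤ ‖q‖ ^ (p.2 : ℕ) :=
    pow_le_pow_of_le_one (norm_nonneg q) hq.le (Nat.le_add_left _ _)
  rw [norm_mul]
  calc _ ≤ (1 - ‖q‖)⁻¹ * ‖q‖ ^ (p.1 : ℕ) * ((1 - ‖q‖)⁻¹ * ‖q‖ ^ (p.2 : ℕ)) := by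
        have := sub_nonneg.2 hq.le
        gcongr
        exacts [norm_lambertTerm_le hq _, (norm_lambertTerm_le hq _).trans (by gcongr)]
    _ = _ := by ring

lemma tsum_sq_add_mul_add_sq_mul_lambertTerm_mul (hq : ‖q‖ < 1) :
    ∑' p : ℕ+ × ℕ+,
        ((p.1 : 𝕜) ^ 2 + p.1 * p.2 + p.2 ^ 2) * (lambertTerm q p.1 * lambertTerm q p.2) =
      ∑' p : ℕ+ × ℕ+, ((p.1 : 𝕜) ^ 2 + p.1 * p.2 + p.2 ^ 2) * lambertTerm q (p.1 + p.2) +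
        2 * ∑' p : ℕ+ × ℕ+, ((p.1 : 𝕜) ^ 2 + p.1 * p.2 + p.2 ^ 2) *
          (lambertTerm q p.1 * lambertTerm q (p.1 + p.2)) := by
  set u := lambertTerm q
  set f : ℕ+ × ℕ+ → 𝕜 := fun p ↦ (p.1 : 𝕜) ^ 2 + p.1 * p.2 + p.2 ^ 2 with hf
  have hC := summable_sq_add_mul_add_sq_mul_lambertTerm_add hq
  have hR := summable_sq_add_mul_add_sq_mul_lambertTerm_mul_add hq
  have hexpand (p : ℕ+ × ℕ+) : f p * (u p.1 * u p.2) = f p * u (p.1 + p.2) +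
      f p * (u p.1 * u (p.1 + p.2)) + f p.swap * (u p.swap.1 * u (p.swap.1 + p.swap.2)) := by
    rw [lambertTerm_mul_lambertTerm hq p.1.ne_zero p.2.ne_zero]
    simp only [hf, Prod.fst_swap, Prod.snd_swap, add_comm (p.2 : ℕ)]
    ring
  have hswap : ∑' p : ℕ+ × ℕ+, f p.swap * (u p.swap.1 * u (p.swap.1 + p.swap.2)) =
      ∑' p, f p * (u p.1 * u (p.1 + p.2)) :=
    (Equiv.prodComm _ _).tsum_eq fun p ↦ f p * (u p.1 * u (p.1 + p.2))
  rw [tsum_congr hexpand, Summable.tsum_add (hC.add hR) hR.prod_symm, Summable.tsum_add hC hR,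
    hswap, two_mul, add_assoc]

lemma tsum_sq_mul_lambertTerm_sq (hq : ‖q‖ < 1) :
    ∑' n : ℕ+, (n : 𝕜) ^ 2 * lambertTerm q n ^ 2 =
      ∑' p : ℕ+ × ℕ+, ((p.1 : 𝕜) ^ 2 + p.1 * p.2 + p.2 ^ 2) * lambertTerm q (p.1 + p.2) -
        2 * lambertSeries q 1 ^ 2 := by
  set u := lambertTerm q
  set f : ℕ+ × ℕ+ → 𝕜 := fun p ↦ (p.1 : 𝕜) ^ 2 + p.1 * p.2 + p.2 ^ 2 with hf
  have hT := summable_sq_add_mul_add_sq_mul_lambertTerm_mul hq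
  have hW : Summable fun p : ℕ+ × ℕ+ ↦ (p.1 : 𝕜) * p.2 * (u p.1 * u p.2) :=
    (summable_mul_of_summable_norm (summable_norm_pow_mul_lambertTerm hq 1)
      (summable_norm_pow_mul_lambertTerm hq 1)).congr fun p ↦ by ring
  have hA : lambertSeries q 1 ^ 2 = ∑' p : ℕ+ × ℕ+, (p.1 : 𝕜) * p.2 * (u p.1 * u p.2) := by
    rw [sq, lambertSeries, tsum_mul_tsum_of_summable_norm (summable_norm_pow_mul_lambertTerm hq 1)
      (summable_norm_pow_mul_lambertTerm hq 1)]
    exact tsum_congr fun p ↦ by ring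
  set G : ℕ+ × ℕ+ → 𝕜 := fun p ↦ f p * (u p.1 * u p.2) - 2 * ((p.1 : 𝕜) * p.2 * (u p.1 * u p.2))
  have hG : ∑' p, G p = ∑' p, f p * (u p.1 * u p.2) - 2 * lambertSeries q 1 ^ 2 := by
    rw [Summable.tsum_sub hT (hW.mul_left 2), tsum_mul_left, hA]
  have hupper (p : ℕ+ × ℕ+) : G (p.1, p.1 + p.2) = f p * (u p.1 * u (p.1 + p.2)) := by
    simp only [G, hf, PNat.add_coe]; push_cast; ring
  have hdiag (n : ℕ+) : G (n, n) = (n : 𝕜) ^ 2 * u n ^ 2 := by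
    simp only [G, hf]; ring
  have hsplit := tsum_pnat_prod_eq_of_symm (F := G) (hT.sub (hW.mul_left 2)) fun m n ↦ by
    simp only [G, hf]; ring
  rw [hG, tsum_congr hupper, tsum_congr hdiag, tsum_sq_add_mul_add_sq_mul_lambertTerm_mul hq]
    at hsplit
  linear_combination -hsplit

open Finset in
lemma six_mul_tsum_sq_add_mul_add_sq_mul_lambertTerm_add (hq : ‖q‖ < 1) :
    6 * ∑' p : ℕ+ × ℕ+, ((p.1 : 𝕜) ^ 2 + p.1 * p.2 + p.2 ^ 2) * lambertTerm q (p.1 + p.2) =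
      5 * lambertSeries q 3 - 6 * lambertSeries q 2 + lambertSeries q 1 := by
  have hS (s : ℕ) := (summable_norm_pow_mul_lambertTerm hq s).of_norm
  have hlin : 5 * lambertSeries q 3 - 6 * lambertSeries q 2 + lambertSeries q 1 =
      ∑' n : ℕ+, (5 * (n : 𝕜) ^ 3 - 6 * (n : 𝕜) ^ 2 + n) * lambertTerm q n := by
    simp only [lambertSeries]
    rw [← tsum_mul_left, ← tsum_mul_left, ← Summable.tsum_sub ((hS 3).mul_left 5)
      ((hS 2).mul_left 6), ← Summable.tsum_add (((hS 3).mul_left 5).sub ((hS 2).mul_left 6)) (hS 1)]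
    exact tsum_congr fun n ↦ by ring
  rw [tsum_pnat_prod_eq_tsum_sum_antidiagonal (E := 𝕜)
      (summable_sq_add_mul_add_sq_mul_lambertTerm_add hq), hlin,
    tsum_pnat_eq_tsum_add_two (f := fun n : ℕ ↦
      (5 * (n : 𝕜) ^ 3 - 6 * (n : 𝕜) ^ 2 + n) * lambertTerm q n) (by norm_num), ← tsum_mul_left]
  refine tsum_congr fun m ↦ ?_
  simp only [Nat.succPNat_coe, Nat.succ_eq_add_one]
  rw [sum_congr rfl fun p hp ↦ by
    rw [show p.1 + 1 + (p.2 + 1) = m + 2 by rw [← HasAntidiagonal.mem_antidiagonal.1 hp]; ring],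
    ← sum_mul]
  have h := congrArg (Nat.cast : ℕ → 𝕜) (six_mul_sum_antidiagonal_sq_add_mul_add_sq m)
  push_cast at h ⊢
  linear_combination h * lambertTerm q (m + 2)

lemma six_mul_tsum_sq_mul_div_one_sub_sq (hq : ‖q‖ < 1) :
    6 * ∑' n : ℕ+, (n : 𝕜) ^ 2 * q ^ (n : ℕ) / (1 - q ^ (n : ℕ)) ^ 2 =
      5 * lambertSeries q 3 + lambertSeries q 1 - 12 * lambertSeries q 1 ^ 2 := by
  have hc : 0 ≤ (1 - ‖q‖)⁻¹ := inv_nonneg.2 (sub_nonneg.2 hq.le)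
  have hZ : Summable fun n : ℕ+ ↦ (n : 𝕜) ^ 2 * lambertTerm q n ^ 2 := by
    refine .of_norm_bounded ((summable_norm_pow_mul_lambertTerm hq 2).mul_right (1 - ‖q‖)⁻¹)
      fun n ↦ ?_
    rw [pow_two (lambertTerm q n), ← mul_assoc, norm_mul]
    gcongr
    exact (norm_lambertTerm_le hq n).trans
      (mul_le_of_le_one_right hc (pow_le_one₀ (norm_nonneg q) hq.le))
  have hsplit : ∑' n : ℕ+, (n : 𝕜) ^ 2 * q ^ (n : ℕ) / (1 - q ^ (n : ℕ)) ^ 2 =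
      lambertSeries q 2 + ∑' n : ℕ+, (n : 𝕜) ^ 2 * lambertTerm q n ^ 2 := by
    rw [lambertSeries, ← Summable.tsum_add (summable_norm_pow_mul_lambertTerm hq 2).of_norm hZ]
    exact tsum_congr fun n ↦ by rw [← mul_add, lambertTerm_add_sq hq n.ne_zero, mul_div_assoc]
  rw [hsplit, tsum_sq_mul_lambertTerm_sq hq]
  linear_combination six_mul_tsum_sq_add_mul_add_sq_mul_lambertTerm_add hq

end Lambert

lemma lambertSeries_eq_tsum_sigma {𝕜 : Type*} [NontriviallyNormedField 𝕜] [CompleteSpace 𝕜]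
    [NormSMulClass ℤ 𝕜] {q : 𝕜} (hq : ‖q‖ < 1) (s : ℕ) :
    lambertSeries q s = ∑' n : ℕ, (ArithmeticFunction.sigma s (n + 1) : 𝕜) * q ^ (n + 1) := by
  simp only [lambertSeries, lambertTerm, ← mul_div_assoc]
  rw [tsum_pow_div_one_sub_eq_tsum_sigma hq s,
    tsum_pnat_eq_tsum_succ (f := fun n ↦ (ArithmeticFunction.sigma s n : 𝕜) * q ^ n)]

/-- The `q`-series identity
`2 (2πi)⁴ ∑_{k ≥ 1} k² qᵏ/(1 - qᵏ)² = (π⁴/9)(E₄(τ) - E₂(τ)²)`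
holds for `τ` in the upper half-plane, where `q = e^{2πiτ}`. -/
theorem qseries_identity_weight_four (τ : ℂ) (hτ : 0 < τ.im) :
    2 * (2 * π * Complex.I) ^ 4 *
        ∑' k : ℕ, ((k + 1 : ℕ) : ℂ) ^ 2 * Complex.exp (2 * π * Complex.I * τ) ^ (k + 1) /
          (1 - Complex.exp (2 * π * Complex.I * τ) ^ (k + 1)) ^ 2 =
      (π : ℂ) ^ 4 / 9 *
        (E₄ (Complex.exp (2 * π * Complex.I * τ)) -
          E₂ (Complex.exp (2 * π * Complex.I * τ)) ^ 2) := by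
  set q := Complex.exp (2 * π * Complex.I * τ)
  have hq : ‖q‖ < 1 := UpperHalfPlane.norm_exp_two_pi_I_lt_one ⟨τ, hτ⟩
  rw [E₂, E₄, ← lambertSeries_eq_tsum_sigma hq, ← lambertSeries_eq_tsum_sigma hq,
    ← tsum_pnat_eq_tsum_succ (f := fun n ↦ (n : ℂ) ^ 2 * q ^ n / (1 - q ^ n) ^ 2),
    mul_pow, mul_pow, Complex.I_pow_four]
  linear_combination (16 * (π : ℂ) ^ 4 / 3) * six_mul_tsum_sq_mul_div_one_sub_sq hq
end
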